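/- arXiv:2202.05776 — 2 statements merged into one kernel-verified Lean document; each statement's English description precedes it below -/
import Mathlib

section
/- Let D be a type equipped with a symmetric neighbor relation ∼, let k ≥ 1, and let A assign to each D ∈ D a probability measure A(D) on ℝ^k. Suppose Δ > 0 is such that for every pair D₁ ∼ D₂ there exists a coupling C of A(D₁) and A(D₂) with ‖z − z′‖₁ ≤ Δ for C-almost every pair (z, z′). Fix ε > 0 and define the Laplace mechanism M(D) to be the distribution of X + (Y₁, …, Y_k), where X has law A(D) and Y₁, …, Y_k are independent of X and i.i.d. with the Laplace distribution Lap(Δ/ε); equivalently M(D) is the convolution of A(D) with the k-fold product of Lap(Δ/ε). Then for every D₁ ∼ D₂ and every measurable set S ⊆ ℝ^k, M(D₁)(S) ≤ exp(ε) · M(D₂)(S). -/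
/-! The Laplace density satisfies `p(z) ≤ e^{|a|/b} p(z + a)`, so translating `Lap(b)^{⊗k}` by `u`
inflates it by at most `e^{‖u‖₁/b}`. The output law `A(D) ∗ Lap(b)^{⊗k}` is the average over
`x ∼ A(D)` of the translates of `Lap(b)^{⊗k}` by `x`; averaging over a coupling of `A(D₁)` and
`A(D₂)` whose coordinates are `Δ`-close in `ℓ₁` compares the two laws translate by translate,
with the factor `e^{Δ/b} = e^ε`. -/

open MeasureTheory

/-- The Laplace distribution `Lap(λ)` on `ℝ`, with density
`z ↦ (1/(2λ))·exp(−|z|/λ)` with respect to Lebesgue measure. -/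
noncomputable def laplaceMeasure (lam : ℝ) : Measure ℝ :=
  volume.withDensity fun z => ENNReal.ofReal ((1 / (2 * lam)) * Real.exp (-|z| / lam))

open Measure
open scoped ENNReal

namespace MeasureTheory.Measure

theorem pi_le_prod_smul_pi {ι : Type*} [Fintype ι] {α : ι → Type*}
    [∀ i, MeasurableSpace (α i)] {μ ν : ∀ i, Measure (α i)} {c : ι → ℝ≥0∞}
    (hc : ∀ i, c i ≠ ∞) (h : ∀ i, μ i ≤ c i • ν i) :
    Measure.pi μ ≤ (∏ i, c i) • Measure.pi ν := by
  -- compare the defining outer measures, so that no σ-finiteness is needed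
  refine le_iff.2 fun s hs => ?_
  rw [smul_apply, smul_eq_mul, Measure.pi_def, Measure.pi_def, toMeasure_apply _ _ hs,
    toMeasure_apply _ _ hs]
  change _ ≤ ((∏ i, c i) • OuterMeasure.pi fun i => (ν i).toOuterMeasure) s
  rw [OuterMeasure.pi, OuterMeasure.pi,
    OuterMeasure.smul_boundedBy (ENNReal.prod_ne_top fun i _ => hc i)]
  refine OuterMeasure.le_boundedBy.2 (fun t => (OuterMeasure.boundedBy_le t).trans ?_) s
  simp only [piPremeasure, Pi.smul_apply, smul_eq_mul, ← Finset.prod_mul_distrib]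
  exact Finset.prod_le_prod' fun i _ => h i _

theorem map_add_right_withDensity_le {G : Type*} [Add G] [MeasurableSpace G] [MeasurableAdd G]
    {μ : Measure G} [μ.IsAddRightInvariant] {g : G → ℝ≥0∞} (hg : Measurable g) {a : G}
    {c : ℝ≥0∞} (h : ∀ x, g x ≤ c * g (x + a)) :
    (μ.withDensity g).map (· + a) ≤ c • μ.withDensity g := by
  refine le_iff.2 fun s hs => ?_
  calc (μ.withDensity g).map (· + a) s = ∫⁻ x in (· + a) ⁻¹' s, g x ∂μ := by
        rw [map_apply (measurable_add_const a) hs, withDensity_apply _ (measurable_add_const a hs)]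
    _ ≤ ∫⁻ x in (· + a) ⁻¹' s, c * g (x + a) ∂μ := lintegral_mono h
    _ = c * ∫⁻ y in s, g y ∂(μ.map (· + a)) := by
        rw [lintegral_const_mul c (by fun_prop : Measurable fun x => g (x + a)),
          setLIntegral_map hs hg (measurable_add_const a)]
    _ = (c • μ.withDensity g) s := by
        rw [map_add_right_eq_self, smul_apply, smul_eq_mul, withDensity_apply _ hs]

theorem conv_le_smul_conv_of_coupling {G : Type*} [AddCommGroup G] [MeasurableSpace G]
    [MeasurableAdd₂ G] {μ₁ μ₂ ν : Measure G} [SFinite ν] {C : Measure (G × G)}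
    (h₁ : C.map Prod.fst = μ₁) (h₂ : C.map Prod.snd = μ₂) {c : ℝ≥0∞}
    (hC : ∀ᵐ p ∂C, ν.map (· + (p.1 - p.2)) ≤ c • ν) :
    μ₁ ∗ ν ≤ c • (μ₂ ∗ ν) := by
  refine le_iff.2 fun s hs => ?_
  have hadd : MeasurableSet ((fun p : G × G => p.1 + p.2) ⁻¹' s) := measurable_add hs
  set φ : G → ℝ≥0∞ := fun x => ν.map (x + ·) s
  have hφ : Measurable φ := by
    simp only [φ, map_apply (measurable_const_add _) hs]
    exact measurable_measure_prodMk_left hadd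
  have conv_apply : ∀ μ : Measure G, (μ ∗ ν) s = ∫⁻ x, φ x ∂μ := fun μ => by
    simp only [φ, map_apply (measurable_const_add _) hs]
    rw [conv, map_apply measurable_add hs, prod_apply hadd]
    rfl
  have shift (x y : G) (h : ν.map (· + (x - y)) ≤ c • ν) : φ x ≤ c * φ y := by
    have hxy : ν.map (x + ·) = (ν.map (· + (x - y))).map (y + ·) := by
      rw [map_map (measurable_const_add y) (measurable_add_const _)]
      congr 1
      funext z
      simp only [Function.comp_apply]
      abel
    calc φ x = (ν.map (· + (x - y))).map (y + ·) s := by rw [← hxy]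
      _ ≤ (c • ν).map (y + ·) s := map_mono h (measurable_const_add y) s
      _ = c * φ y := by rw [Measure.map_smul, smul_apply, smul_eq_mul]
  calc (μ₁ ∗ ν) s = ∫⁻ p, φ p.1 ∂C := by
        rw [conv_apply, ← h₁, lintegral_map hφ measurable_fst]
    _ ≤ ∫⁻ p, c * φ p.2 ∂C := lintegral_mono_ae (hC.mono fun p hp => shift _ _ hp)
    _ = (c • (μ₂ ∗ ν)) s := by
        rw [lintegral_const_mul c (f := fun p : G × G => φ p.2) (hφ.comp measurable_snd),
          ← lintegral_map hφ measurable_snd, h₂, smul_apply, smul_eq_mul, conv_apply]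

end MeasureTheory.Measure

instance (b : ℝ) : SigmaFinite (laplaceMeasure b) := by
  unfold laplaceMeasure
  infer_instance

theorem laplaceMeasure_map_add_le {b : ℝ} (hb : 0 ≤ b) (a : ℝ) :
    (laplaceMeasure b).map (· + a) ≤
      ENNReal.ofReal (Real.exp (|a| / b)) • laplaceMeasure b := by
  refine map_add_right_withDensity_le (by fun_prop) fun z => ?_
  rw [← ENNReal.ofReal_mul (Real.exp_nonneg _)]
  refine ENNReal.ofReal_le_ofReal ?_
  rw [mul_left_comm, ← Real.exp_add]
  gcongr
  rw [← add_div]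
  gcongr
  linarith [abs_add_le z a]

theorem pi_laplaceMeasure_map_add_le {k : ℕ} {b : ℝ} (hb : 0 ≤ b) {u : Fin k → ℝ}
    {r : ℝ} (hu : ∑ i, |u i| ≤ r) :
    (Measure.pi fun _ : Fin k => laplaceMeasure b).map (· + u) ≤
      ENNReal.ofReal (Real.exp (r / b)) • Measure.pi fun _ : Fin k => laplaceMeasure b := by
  have (a : ℝ) : SigmaFinite ((laplaceMeasure b).map (· + a)) :=
    (measurableEmbedding_addRight a).sigmaFinite_map
  calc (Measure.pi fun _ : Fin k => laplaceMeasure b).map (· + u)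
      = Measure.pi fun i => (laplaceMeasure b).map (· + u i) :=
        pi_map_pi fun i => (measurable_add_const (u i)).aemeasurable
    _ ≤ (∏ i, ENNReal.ofReal (Real.exp (|u i| / b))) • Measure.pi fun _ => laplaceMeasure b :=
        pi_le_prod_smul_pi (fun _ => ENNReal.ofReal_ne_top)
          fun i => laplaceMeasure_map_add_le hb (u i)
    _ ≤ ENNReal.ofReal (Real.exp (r / b)) • Measure.pi fun _ => laplaceMeasure b := by
        rw [← ENNReal.ofReal_prod_of_nonneg fun i _ => (Real.exp_nonneg _), ← Real.exp_sum,
          ← Finset.sum_div]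
        gcongr

theorem laplace_mechanism_of_coupled_global_sensitivity_general
    {D : Type*} (nb : D → D → Prop)
    (k : ℕ)
    (A : D → Measure (Fin k → ℝ))
    (Δ : ℝ) (hΔ : 0 < Δ)
    (hcgs : ∀ D₁ D₂, nb D₁ D₂ →
      ∃ C : Measure ((Fin k → ℝ) × (Fin k → ℝ)),
        IsProbabilityMeasure C ∧
        C.map Prod.fst = A D₁ ∧ C.map Prod.snd = A D₂ ∧
        ∀ᵐ p ∂C, ∑ i, |p.1 i - p.2 i| ≤ Δ)
    (ε : ℝ) (hε : 0 < ε)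
    (M : D → Measure (Fin k → ℝ))
    (hM : ∀ d, M d =
      ((A d).prod (Measure.pi fun _ : Fin k => laplaceMeasure (Δ / ε))).map
        (fun p => p.1 + p.2)) :
    ∀ D₁ D₂, nb D₁ D₂ → ∀ S : Set (Fin k → ℝ), MeasurableSet S →
      M D₁ S ≤ ENNReal.ofReal (Real.exp ε) * M D₂ S := by
  intro D₁ D₂ hnb S _
  obtain ⟨C, -, hfst, hsnd, hsens⟩ := hcgs D₁ D₂ hnb
  have hscale : Δ / (Δ / ε) = ε := by field_simp
  have hshift : ∀ᵐ p ∂C,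
      (Measure.pi fun _ : Fin k => laplaceMeasure (Δ / ε)).map (· + (p.1 - p.2)) ≤
        ENNReal.ofReal (Real.exp ε) • Measure.pi fun _ => laplaceMeasure (Δ / ε) := by
    filter_upwards [hsens] with p hp
    simpa only [hscale] using
      pi_laplaceMeasure_map_add_le (b := Δ / ε) (u := p.1 - p.2) (by positivity) hp
  rw [hM, hM]
  exact conv_le_smul_conv_of_coupling hfst hsnd hshift S

/-- If a randomized algorithm `A` has coupled global sensitivity at most `Δ` (witnessed by
almost-sure `ℓ₁`-bounded couplings on neighboring inputs), then the Laplace mechanism obtained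
by adding i.i.d. `Lap(Δ/ε)` noise to each of the `k` coordinates of the output of `A`
is `ε`-differentially private. -/
theorem laplace_mechanism_of_coupled_global_sensitivity
    {D : Type*} (nb : D → D → Prop) (hsym : Symmetric nb)
    (k : ℕ) (hk : 1 ≤ k)
    (A : D → Measure (Fin k → ℝ))
    (hprob : ∀ d, IsProbabilityMeasure (A d))
    (Δ : ℝ) (hΔ : 0 < Δ)
    (hcgs : ∀ D₁ D₂, nb D₁ D₂ →
      ∃ C : Measure ((Fin k → ℝ) × (Fin k → ℝ)),
        IsProbabilityMeasure C ∧
        C.map Prod.fst = A D₁ ∧ C.map Prod.snd = A D₂ ∧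
        ∀ᵐ p ∂C, ∑ i, |p.1 i - p.2 i| ≤ Δ)
    (ε : ℝ) (hε : 0 < ε)
    (M : D → Measure (Fin k → ℝ))
    (hM : ∀ d, M d =
      ((A d).prod (Measure.pi fun _ : Fin k => laplaceMeasure (Δ / ε))).map
        (fun p => p.1 + p.2)) :
    ∀ D₁ D₂, nb D₁ D₂ → ∀ S : Set (Fin k → ℝ), MeasurableSet S →
      M D₁ S ≤ ENNReal.ofReal (Real.exp ε) * M D₂ S :=
  laplace_mechanism_of_coupled_global_sensitivity_general nb k A Δ hΔ hcgs ε hε M hM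
end

section
/- Let G₁ be a simple graph on a finite vertex set V, let e* be an unordered pair of distinct vertices of V that is not an edge of G₁, and let G₂ be the graph whose edge set is the edge set of G₁ together with e*. Let π be an injective ranking assigning distinct real values to all unordered pairs of distinct vertices of V, and let M_π(G₁) and M_π(G₂) be the greedy matchings of G₁ and G₂ with respect to π. If e* ∉ M_π(G₂), then M_π(G₁) = M_π(G₂); in particular |M_π(G₁)| = |M_π(G₂)|. -/
/-- `M` is the greedy matching of the graph `G` with respect to the ranking `π`:
an edge `e` of `G` belongs to `M` iff no edge `e'` of `G` sharing an endpoint with `e`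
and of strictly smaller rank belongs to `M`. -/
def IsGreedyMatching {V : Type*} (G : SimpleGraph V) (π : Sym2 V → ℝ)
    (M : Set (Sym2 V)) : Prop :=
  ∀ e : Sym2 V, e ∈ M ↔ e ∈ G.edgeSet ∧
    ∀ e' ∈ G.edgeSet, (∃ v, v ∈ e ∧ v ∈ e') → π e' < π e → e' ∉ M

/-!
A graph has at most one greedy matching: by well-founded induction on the rank, whether an
edge belongs to it is decided by the lower-ranked edges. A greedy matching of `G₂` avoiding
`e*` lies in `G₁`, so it satisfies the greedy conditions of `G₁` as well, and by uniqueness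
it is the greedy matching of `G₁`.
-/

namespace IsGreedyMatching

variable {V : Type*} {G G₁ G₂ : SimpleGraph V} {π : Sym2 V → ℝ} {M M' : Set (Sym2 V)}

theorem subset_edgeSet (hM : IsGreedyMatching G π M) : M ⊆ G.edgeSet :=
  fun e he => ((hM e).1 he).1

theorem of_le (hM : IsGreedyMatching G₂ π M) (hle : G₁ ≤ G₂) (hsub : M ⊆ G₁.edgeSet) :
    IsGreedyMatching G₁ π M := by
  have hE : G₁.edgeSet ⊆ G₂.edgeSet := SimpleGraph.edgeSet_mono hle
  intro e
  constructor
  · intro he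
    exact ⟨hsub he, fun e' he' => ((hM e).1 he).2 e' (hE he')⟩
  · rintro ⟨heG, hmin⟩
    refine (hM e).2 ⟨hE heG, fun e' _ hshare hlt he'M => ?_⟩
    exact hmin e' (hsub he'M) hshare hlt he'M

theorem unique [Finite V] (hM : IsGreedyMatching G π M) (hM' : IsGreedyMatching G π M') :
    M = M' := by
  have hwf : WellFounded fun e e' : Sym2 V => π e < π e' :=
    Set.wellFoundedOn_range.1 (Set.finite_range π).wellFoundedOn
  ext e
  induction e using hwf.induction with
  | _ e ih =>
    rw [hM e, hM' e]
    refine and_congr_right fun _ => forall₂_congr fun e' _ => ?_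
    exact forall₂_congr fun _ hlt => not_congr (ih e' hlt)

end IsGreedyMatching

theorem greedyMatching_eq_of_not_mem_general {V : Type*} [Fintype V]
    (G₁ G₂ : SimpleGraph V) (a b : V)
    (hG₂ : G₂.edgeSet = insert s(a, b) G₁.edgeSet)
    (π : Sym2 V → ℝ)
    (M₁ M₂ : Set (Sym2 V))
    (hM₁ : IsGreedyMatching G₁ π M₁) (hM₂ : IsGreedyMatching G₂ π M₂)
    (hstar : s(a, b) ∉ M₂) :
    M₁ = M₂ ∧ M₁.ncard = M₂.ncard := by
  have hle : G₁ ≤ G₂ := SimpleGraph.edgeSet_subset_edgeSet.1 (hG₂ ▸ Set.subset_insert _ _)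
  have hsub : M₂ ⊆ G₁.edgeSet :=
    (Set.subset_insert_iff_of_notMem hstar).1 (hG₂ ▸ hM₂.subset_edgeSet)
  have heq : M₁ = M₂ := hM₁.unique (hM₂.of_le hle hsub)
  exact ⟨heq, heq ▸ rfl⟩

/-- If `G₂` is obtained from `G₁` by adding a single edge `e* = s(a,b)` and the greedy
matching of `G₂` (with respect to an injective ranking `π` of the unordered pairs of
distinct vertices) does not contain `e*`, then the greedy matchings of `G₁` and `G₂`
coincide; in particular they have the same size. -/
theorem greedyMatching_eq_of_not_mem {V : Type*} [Fintype V]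
    (G₁ G₂ : SimpleGraph V) (a b : V) (hab : a ≠ b)
    (hne : s(a, b) ∉ G₁.edgeSet)
    (hG₂ : G₂.edgeSet = insert s(a, b) G₁.edgeSet)
    (π : Sym2 V → ℝ)
    (hπ : ∀ e₁ e₂ : Sym2 V, ¬e₁.IsDiag → ¬e₂.IsDiag → π e₁ = π e₂ → e₁ = e₂)
    (M₁ M₂ : Set (Sym2 V))
    (hM₁ : IsGreedyMatching G₁ π M₁) (hM₂ : IsGreedyMatching G₂ π M₂)
    (hstar : s(a, b) ∉ M₂) :
    M₁ = M₂ ∧ M₁.ncard = M₂.ncard :=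
  greedyMatching_eq_of_not_mem_general G₁ G₂ a b hG₂ π M₁ M₂ hM₁ hM₂ hstar
end
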